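/- Clifford inequality for the Baker–Norine rank: If d is a divisor on a connected weightless loopless multigraph G of genus g with 0 ≤ deg(d) ≤ 2g − 2, then 2·r_G(d) ≤ deg(d). -/

import Mathlib

open Finset

section Preliminaries

variable {V : Type} [Fintype V] [DecidableEq V]

/-- The degree of a divisor on a graph with vertex set `V`. -/
def degDiv (d : V → ℤ) : ℤ := ∑ v, d v

/-- A divisor is effective if it is nonnegative at every vertex. -/
def Effective (d : V → ℤ) : Prop := ∀ v, 0 ≤ d v

/-- The principal divisor `t_Z` associated to a subset `Z` of vertices, for the
graph with edge multiplicity function `m`. -/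
def tZ (m : V → V → ℕ) (Z : Finset V) : V → ℤ := fun v =>
  if v ∈ Z then -(∑ u ∈ Zᶜ, (m v u : ℤ)) else ∑ u ∈ Z, (m v u : ℤ)

/-- Two divisors are linearly equivalent if their difference lies in the subgroup
generated by the divisors `t_Z`. -/
def LinEquiv (m : V → V → ℕ) (d d' : V → ℤ) : Prop :=
  d - d' ∈ AddSubgroup.closure (Set.range (tZ m))

/-- The simple graph associated to an edge multiplicity function `m`
(an edge between distinct `u`, `v` whenever `m u v > 0`; loops are discarded). -/
def assocGraph (m : V → V → ℕ) : SimpleGraph V where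
  Adj u v := u ≠ v ∧ (0 < m u v ∨ 0 < m v u)
  symm := ⟨fun _ _ h => ⟨h.1.symm, h.2.symm⟩⟩
  loopless := ⟨fun _ h => h.1 rfl⟩

end Preliminaries

section Rank

variable {V : Type} [Fintype V] [DecidableEq V]

/-- The set of integers `k` such that either `k = -1`, or `k ≥ 0` and for every
effective divisor `e` of degree `k`, the divisor `d - e` is linearly equivalent
to an effective divisor. -/
def bnRankSet (m : V → V → ℕ) (d : V → ℤ) : Set ℤ :=
  {k : ℤ | k = -1 ∨ (0 ≤ k ∧ ∀ e : V → ℤ, Effective e → degDiv e = k →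
      ∃ f : V → ℤ, Effective f ∧ LinEquiv m (d - e) f)}

/-- The Baker–Norine rank of a divisor `d` on the weightless loopless multigraph
with edge multiplicity function `m`. -/
noncomputable def bnRank (m : V → V → ℕ) (d : V → ℤ) : ℤ := sSup (bnRankSet m d)

end Rank

section Genus

variable {V : Type} [Fintype V] [DecidableEq V]

/-- The genus of a weightless loopless multigraph: `|E| - |V| + 1` where
`|E| = (1/2) ∑_{u,v} m u v`. -/
def genus (m : V → V → ℕ) : ℤ :=
  (∑ u, ∑ v, (m u v : ℤ)) / 2 - Fintype.card V + 1

/-- The canonical divisor of a weightless loopless multigraph: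
`k_G(v) = val(v) - 2`. -/
def canonical (m : V → V → ℕ) : V → ℤ := fun v => (∑ u, (m v u : ℤ)) - 2

end Genus

/-!
Clifford's inequality follows from three properties of the Baker–Norine rank `r`: half of
Riemann–Roch, `r(d) - r(K - d) ≤ deg d - g + 1`; subadditivity, `r(d) + r(d') ≤ r(d + d')` when
both ranks are nonnegative; and `r(K) ≤ g - 1`. If `r(d)` and `r(K - d)` are nonnegative they give
`2 r(d) ≤ deg d - g + 1 + r(K) ≤ deg d`; if `r(K - d) = -1`, Riemann–Roch alone gives
`r(d) ≤ deg d - g`, which suffices because `deg d ≤ 2g - 2`.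

The Riemann–Roch inequality is Baker–Norine's argument: no divisor `ν_O` (indegree minus one for an
acyclic orientation `O`) is equivalent to an effective divisor, and for every divisor `a` either `a`
or some `ν_O - a` is. The dichotomy comes from a `q`-reduced divisor equivalent to `a`, obtained by
maximising a potential over divisors equivalent to `a`, and oriented by Dhar's burning algorithm.
-/

variable {V : Type} [Fintype V] {m : V → V → ℕ}

def laplacian (m : V → V → ℕ) : (V → ℤ) →+ (V → ℤ) where
  toFun σ v := ∑ u, (m v u : ℤ) * (σ u - σ v)
  map_zero' := by ext; simp
  map_add' σ τ := by
    ext v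
    simp only [Pi.add_apply, ← sum_add_distrib]
    exact sum_congr rfl fun _ _ => by ring

lemma laplacian_apply (σ : V → ℤ) (v : V) :
    laplacian m σ v = ∑ u, (m v u : ℤ) * (σ u - σ v) := rfl

lemma sum_laplacian_mul (hsymm : ∀ u v, m u v = m v u) (f g : V → ℤ) :
    ∑ v, laplacian m f v * g v = ∑ v, f v * laplacian m g v := by
  have hswap : ∑ v, ∑ u, (m v u : ℤ) * f u * g v = ∑ v, ∑ u, (m v u : ℤ) * f v * g u := by
    rw [sum_comm]
    exact sum_congr rfl fun v _ => sum_congr rfl fun u _ => by rw [hsymm]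
  simp only [laplacian_apply, sum_mul, mul_sum, mul_sub, sub_mul, sum_sub_distrib]
  rw [hswap]
  congr 1
  · exact sum_congr rfl fun v _ => sum_congr rfl fun u _ => by ring
  · exact sum_congr rfl fun v _ => sum_congr rfl fun u _ => by ring

lemma degDiv_add (d d' : V → ℤ) : degDiv (d + d') = degDiv d + degDiv d' :=
  sum_add_distrib

lemma degDiv_sub (d d' : V → ℤ) : degDiv (d - d') = degDiv d - degDiv d' :=
  sum_sub_distrib ..

lemma Effective.degDiv_nonneg {d : V → ℤ} (h : Effective d) : 0 ≤ degDiv d :=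
  sum_nonneg fun v _ => h v

lemma degDiv_laplacian (hsymm : ∀ u v, m u v = m v u) (σ : V → ℤ) :
    degDiv (laplacian m σ) = 0 := by
  have hconst : laplacian m (fun _ => 1) = 0 := by ext; simp [laplacian_apply]
  simpa [degDiv, hconst] using sum_laplacian_mul hsymm σ (fun _ => 1)

/-- `ν_O` for the acyclic orientation `O` pointing every edge towards its endpoint of larger `ρ`:
indegree minus one. -/
def moderator (m : V → V → ℕ) (ρ : V → ℤ) : V → ℤ :=
  fun v => ∑ u ∈ univ.filter (fun u => ρ u < ρ v), (m v u : ℤ) - 1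

lemma neg_one_le_moderator (ρ : V → ℤ) (v : V) : -1 ≤ moderator m ρ v := by
  have : (0 : ℤ) ≤ ∑ u ∈ univ.filter (fun u => ρ u < ρ v), (m v u : ℤ) := by positivity
  simp only [moderator]
  linarith

lemma moderator_add_moderator_neg (hloop : ∀ v, m v v = 0) {ρ : V → ℤ}
    (hρ : Function.Injective ρ) : moderator m ρ + moderator m (-ρ) = canonical m := by
  ext v
  have hsplit : ∀ u, (if ρ u < ρ v then (m v u : ℤ) else 0) + (if ρ v < ρ u then (m v u : ℤ) else 0)
      = m v u := fun u => by
    rcases lt_trichotomy (ρ u) (ρ v) with h | h | h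
    · simp [h, h.not_gt]
    · simp [hρ h, hloop]
    · simp [h, h.not_gt]
  simp only [Pi.add_apply, moderator, canonical, Pi.neg_apply, neg_lt_neg_iff, sum_filter]
  rw [← sum_congr rfl fun u _ => hsplit u, sum_add_distrib]
  ring

lemma degDiv_moderator_neg (hsymm : ∀ u v, m u v = m v u) (ρ : V → ℤ) :
    degDiv (moderator m (-ρ)) = degDiv (moderator m ρ) := by
  simp only [degDiv, moderator, Pi.neg_apply, neg_lt_neg_iff, sum_filter, sum_sub_distrib]
  rw [sum_comm]
  simp_rw [hsymm]

lemma degDiv_moderator (hsymm : ∀ u v, m u v = m v u) (hloop : ∀ v, m v v = 0) {ρ : V → ℤ}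
    (hρ : Function.Injective ρ) : degDiv (moderator m ρ) = genus m - 1 := by
  have hK : degDiv (canonical m) = ∑ u, ∑ v, (m u v : ℤ) - 2 * Fintype.card V := by
    simp [degDiv, canonical, sum_sub_distrib, mul_comm]
  have h2 := congrArg degDiv (moderator_add_moderator_neg hloop hρ)
  rw [degDiv_add, degDiv_moderator_neg hsymm, hK] at h2
  rw [genus]
  omega

lemma exists_injective_lt_of_lt (h : V → ℕ) :
    ∃ ρ : V → ℤ, Function.Injective ρ ∧ ∀ u v, h u < h v → ρ u < ρ v := by
  let e := Fintype.equivFin V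
  let ρ : V → ℤ := fun v => h v * Fintype.card V + (e v : ℕ)
  have hlt : ∀ u v, h u < h v → ρ u < ρ v := by
    intro u v huv
    have heu : ((e u : ℕ) : ℤ) < Fintype.card V := by exact_mod_cast (e u).2
    have hev : (0 : ℤ) ≤ (e v : ℕ) := by positivity
    have : ((h u : ℤ) + 1) * Fintype.card V ≤ h v * Fintype.card V := by
      gcongr
      exact_mod_cast huv
    simp only [ρ]
    linarith
  refine ⟨ρ, fun u v huv => ?_, hlt⟩
  rcases lt_trichotomy (h u) (h v) with hc | hc | hc
  · exact absurd huv (hlt u v hc).ne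
  · have : ((e u : ℕ) : ℤ) = (e v : ℕ) := by simpa [ρ, hc] using huv
    exact e.injective (Fin.val_injective (by exact_mod_cast this))
  · exact absurd huv (hlt v u hc).ne'

lemma degDiv_canonical (hsymm : ∀ u v, m u v = m v u) (hloop : ∀ v, m v v = 0) :
    degDiv (canonical m) = 2 * genus m - 2 := by
  obtain ⟨ρ, hρ, -⟩ := exists_injective_lt_of_lt (fun _ : V => 0)
  rw [← moderator_add_moderator_neg hloop hρ, degDiv_add, degDiv_moderator_neg hsymm,
    degDiv_moderator hsymm hloop hρ]
  ring

variable [DecidableEq V]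

lemma degDiv_single (v : V) (c : ℤ) : degDiv (Pi.single v c) = c := by
  simp [degDiv]

omit [Fintype V] in
lemma effective_single (v : V) {c : ℤ} (hc : 0 ≤ c) : Effective (Pi.single v c) := fun u => by
  by_cases hu : u = v <;> simp [hu, hc]

lemma exists_effective_sub_effective {e : V → ℤ} (he : Effective e) {k : ℤ} (hk : 0 ≤ k)
    (hke : k ≤ degDiv e) : ∃ e₁, Effective e₁ ∧ Effective (e - e₁) ∧ degDiv e₁ = k := by
  lift k to ℕ using hk
  induction k with
  | zero => exact ⟨0, fun _ => le_rfl, by simpa using he, by simp [degDiv]⟩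
  | succ k ih =>
    obtain ⟨e₁, he₁, hrest, hdeg⟩ := ih (by push_cast at hke; linarith)
    have hpos : ∑ _v : V, (0 : ℤ) < ∑ v, (e - e₁) v := by
      rw [sum_const_zero]
      change 0 < degDiv (e - e₁)
      rw [degDiv_sub, hdeg]
      push_cast at hke
      linarith
    obtain ⟨v, -, hv⟩ := exists_lt_of_sum_lt hpos
    have hsingle := effective_single v zero_le_one
    refine ⟨e₁ + Pi.single v 1, fun u => add_nonneg (he₁ u) (hsingle u), fun u => ?_, ?_⟩
    · by_cases hu : u = v
      · subst hu
        simp only [Pi.sub_apply, Pi.add_apply, Pi.single_eq_same] at hv ⊢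
        linarith
      · simpa [Pi.single_eq_of_ne hu] using hrest u
    · rw [degDiv_add, hdeg, degDiv_single]
      push_cast
      ring

lemma tZ_eq_laplacian (Z : Finset V) :
    tZ m Z = laplacian m (fun v => if v ∈ Z then 1 else 0) := by
  ext v
  have hind : ∑ u, (m v u : ℤ) * (if u ∈ Z then 1 else 0) = ∑ u ∈ Z, (m v u : ℤ) := by
    simp [mul_ite]
  have hsplit := sum_add_sum_compl Z (fun u => (m v u : ℤ))
  rw [tZ, laplacian_apply]
  simp only [mul_sub, sum_sub_distrib, hind, ← sum_mul]
  split_ifs <;> linarith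

lemma closure_range_tZ : AddSubgroup.closure (Set.range (tZ m)) = (laplacian m).range := by
  refine le_antisymm ((AddSubgroup.closure_le _).2 ?_) ?_
  · rintro _ ⟨Z, rfl⟩
    exact ⟨_, (tZ_eq_laplacian Z).symm⟩
  · rintro _ ⟨σ, rfl⟩
    have hsingle : ∀ v, laplacian m (Pi.single v 1) = tZ m {v} := fun v => by
      rw [tZ_eq_laplacian]
      congr 1
      ext u
      simp [Pi.single_apply]
    rw [← univ_sum_single σ, map_sum]
    refine AddSubgroup.sum_mem _ fun v _ => ?_
    rw [← mul_one (σ v), ← smul_eq_mul, Pi.single_smul, map_zsmul, hsingle]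
    exact AddSubgroup.zsmul_mem _
      (AddSubgroup.subset_closure (Set.mem_range_self ({v} : Finset V))) _

lemma linEquiv_iff {d d' : V → ℤ} : LinEquiv m d d' ↔ ∃ σ, laplacian m σ = d - d' := by
  rw [LinEquiv, closure_range_tZ]
  rfl

lemma linEquiv_refl (d : V → ℤ) : LinEquiv m d d := by
  simp [LinEquiv, zero_mem]

lemma LinEquiv.add {d d' e e' : V → ℤ} (h : LinEquiv m d d') (h' : LinEquiv m e e') :
    LinEquiv m (d + e) (d' + e') := by
  rw [LinEquiv, add_sub_add_comm]
  exact add_mem h h'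

lemma LinEquiv.degDiv_eq (hsymm : ∀ u v, m u v = m v u) {d d' : V → ℤ} (h : LinEquiv m d d') :
    degDiv d = degDiv d' := by
  obtain ⟨σ, hσ⟩ := linEquiv_iff.1 h
  have := degDiv_laplacian hsymm σ
  rw [hσ, degDiv_sub] at this
  linarith

def LinEquivEffective (m : V → V → ℕ) (d : V → ℤ) : Prop :=
  ∃ f, Effective f ∧ LinEquiv m d f

lemma Effective.linEquivEffective {d : V → ℤ} (h : Effective d) : LinEquivEffective m d :=
  ⟨d, h, linEquiv_refl d⟩

lemma LinEquivEffective.of_linEquiv {d d' : V → ℤ} (h : LinEquivEffective m d')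
    (hd : LinEquiv m d d') : LinEquivEffective m d := by
  obtain ⟨f, hf, hd'⟩ := h
  refine ⟨f, hf, ?_⟩
  rw [LinEquiv, ← sub_add_sub_cancel d d' f]
  exact add_mem hd hd'

lemma LinEquivEffective.add {d d' : V → ℤ} (h : LinEquivEffective m d)
    (h' : LinEquivEffective m d') : LinEquivEffective m (d + d') := by
  obtain ⟨f, hf, hd⟩ := h
  obtain ⟨f', hf', hd'⟩ := h'
  exact ⟨f + f', fun v => add_nonneg (hf v) (hf' v), hd.add hd'⟩

lemma LinEquivEffective.degDiv_nonneg (hsymm : ∀ u v, m u v = m v u) {d : V → ℤ}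
    (h : LinEquivEffective m d) : 0 ≤ degDiv d := by
  obtain ⟨f, hf, hd⟩ := h
  rw [hd.degDiv_eq hsymm]
  exact hf.degDiv_nonneg

-- When `B` fires, `v ∈ B` loses `∑ u ∈ Bᶜ, m v u` chips.
def NoLegalSetFiring (m : V → V → ℕ) (x : V → ℤ) (A : Finset V) : Prop :=
  ∀ B ⊆ A, B.Nonempty → ∃ v ∈ B, x v < ∑ u ∈ Bᶜ, (m v u : ℤ)

lemma noLegalSetFiring_zero (hsymm : ∀ u v, m u v = m v u) (hconn : (assocGraph m).Connected)
    (q : V) : NoLegalSetFiring m 0 (univ.erase q) := by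
  intro B hB ⟨a, ha⟩
  obtain ⟨p⟩ := hconn a q
  obtain ⟨dt, -, hfst, hsnd⟩ := p.exists_boundary_dart (B : Set V) ha
    (fun hq => by simpa using hB hq)
  have hpos : 0 < m dt.fst dt.snd := by
    rcases dt.adj.2 with h | h
    · exact h
    · rwa [hsymm]
  refine ⟨dt.fst, hfst, ?_⟩
  calc (0 : V → ℤ) dt.fst < m dt.fst dt.snd := by simpa using hpos
    _ ≤ ∑ u ∈ Bᶜ, (m dt.fst u : ℤ) :=
      single_le_sum (f := fun u => (m dt.fst u : ℤ)) (fun _ _ => by positivity)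
        (mem_compl.2 hsnd)

/-- Dhar's burning algorithm: repeatedly remove a vertex that cannot fire together with the rest;
it gets a level below all vertices removed after it. -/
lemma NoLegalSetFiring.exists_level {x : V → ℤ} {A : Finset V} (hA : NoLegalSetFiring m x A) :
    ∃ h : V → ℕ, ∀ v ∈ A, x v < ∑ u ∈ univ.filter (fun u => h u < h v), (m v u : ℤ) := by
  induction A using Finset.strongInduction with
  | H A ih =>
  rcases A.eq_empty_or_nonempty with rfl | hne
  · exact ⟨0, by simp⟩
  obtain ⟨v, hvA, hv⟩ := hA A subset_rfl hne
  obtain ⟨h', hh'⟩ := ih (A.erase v) (erase_ssubset hvA)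
    fun B hB => hA B (hB.trans (erase_subset v A))
  let h : V → ℕ := fun u => if u ∈ A then (if u = v then 1 else h' u + 2) else 0
  have hle : ∀ u, h u ≤ h' u + 2 := fun u => by simp only [h]; split_ifs <;> omega
  have hsum_mono : ∀ w (s t : Finset V), s ⊆ t → ∑ u ∈ s, (m w u : ℤ) ≤ ∑ u ∈ t, (m w u : ℤ) :=
    fun w s t hst => sum_le_sum_of_subset_of_nonneg hst fun _ _ _ => by positivity
  refine ⟨h, fun w hw => ?_⟩
  by_cases hwv : w = v
  · subst hwv
    refine hv.trans_le (hsum_mono w _ _ fun u hu => ?_)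
    simp [h, hw, mem_compl.1 hu]
  · have hw' : h w = h' w + 2 := by simp [h, hw, hwv]
    refine (hh' w (mem_erase.2 ⟨hwv, hw⟩)).trans_le (hsum_mono w _ _ fun u hu => ?_)
    simp only [mem_filter, mem_univ, true_and] at hu ⊢
    linarith [hle u]

lemma exists_laplacian_pos (hsymm : ∀ u v, m u v = m v u) (hconn : (assocGraph m).Connected)
    (q : V) : ∃ w : V → ℤ, ∀ v ≠ q, 0 < laplacian m w v := by
  obtain ⟨h, hh⟩ := (noLegalSetFiring_zero hsymm hconn q).exists_level
  set B : ℤ := ∑ u, ∑ v, (m u v : ℤ) + 1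
  set N := ∑ v, h v
  -- From `v ≠ q` to a lower neighbour the weight grows by the factor `B`, larger than the valence
  -- of `v`, so that neighbour alone makes `laplacian m w v` positive.
  refine ⟨fun v => B ^ (N - h v), fun v hv => ?_⟩
  obtain ⟨z, hz, hmz⟩ := exists_lt_of_sum_lt (s := univ.filter fun u => h u < h v) (f := fun _ => 0)
    (g := fun u => (m v u : ℤ)) (by simpa using hh v (mem_erase.2 ⟨hv, mem_univ v⟩))
  simp only [mem_filter, mem_univ, true_and] at hz
  have hB : 1 ≤ B := by
    have : 0 ≤ ∑ u, ∑ v, (m u v : ℤ) := by positivity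
    linarith
  have hval : ∑ u, (m v u : ℤ) < B :=
    Int.lt_add_one_of_le (single_le_sum (f := fun w => ∑ u, (m w u : ℤ))
      (fun _ _ => by positivity) (mem_univ v))
  have hwz : B * B ^ (N - h v) ≤ B ^ (N - h z) := by
    rw [← pow_succ']
    have : h v ≤ N := single_le_sum (f := h) (fun _ _ => Nat.zero_le _) (mem_univ v)
    exact pow_le_pow_right₀ hB (by omega)
  have hmz1 : (1 : ℤ) ≤ m v z := hmz
  have hmz_le : (m v z : ℤ) * B ^ (N - h z) ≤ ∑ u, (m v u : ℤ) * B ^ (N - h u) :=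
    single_le_sum (f := fun u => (m v u : ℤ) * B ^ (N - h u)) (fun _ _ => by positivity)
      (mem_univ z)
  rw [laplacian_apply]
  simp only [mul_sub, sum_sub_distrib, ← sum_mul, sub_pos]
  calc (∑ u, (m v u : ℤ)) * B ^ (N - h v) < B * B ^ (N - h v) := by gcongr
    _ ≤ 1 * B ^ (N - h z) := by rw [one_mul]; exact hwz
    _ ≤ (m v z : ℤ) * B ^ (N - h z) := by gcongr
    _ ≤ _ := hmz_le

lemma le_of_laplacian_pos {w : V → ℤ} {q : V} (hw : ∀ v ≠ q, 0 < laplacian m w v) (v : V) :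
    w v ≤ w q := by
  obtain ⟨u, -, hu⟩ := univ.exists_max_image w ⟨v, mem_univ v⟩
  by_cases huq : u = q
  · exact huq ▸ hu v (mem_univ v)
  · refine absurd (hw u huq) (not_lt.2 ?_)
    rw [laplacian_apply]
    exact sum_nonpos fun x _ =>
      mul_nonpos_of_nonneg_of_nonpos (by positivity) (sub_nonpos.2 (hu x (mem_univ x)))

lemma sum_tZ_mul (hsymm : ∀ u v, m u v = m v u) (A : Finset V) (w : V → ℤ) :
    ∑ v, tZ m A v * w v = ∑ v ∈ A, laplacian m w v := by
  rw [tZ_eq_laplacian, sum_laplacian_mul hsymm]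
  simp [ite_mul]

lemma exists_linEquiv_nonneg_off (hsymm : ∀ u v, m u v = m v u)
    (hconn : (assocGraph m).Connected) (q : V) (a : V → ℤ) :
    ∃ x, LinEquiv m a x ∧ ∀ v ≠ q, 0 ≤ x v := by
  obtain ⟨w, hw⟩ := exists_laplacian_pos hsymm hconn q
  set C := ∑ v, |a v|
  refine ⟨a + laplacian m (C • w), ?_, fun v hv => ?_⟩
  · rw [linEquiv_iff]
    exact ⟨-(C • w), by simp⟩
  · have hCa : -a v ≤ C :=
      (neg_le_abs (a v)).trans (single_le_sum (f := fun v => |a v|) (fun _ _ => abs_nonneg _)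
        (mem_univ v))
    have hw1 : 1 ≤ laplacian m w v := hw v hv
    have hC : 0 ≤ C := by positivity
    rw [Pi.add_apply, map_zsmul, Pi.smul_apply, smul_eq_mul]
    nlinarith

/-- Legal set-firings away from `q` strictly increase the potential `∑ v, x v * w v`, which is
bounded on the divisors equivalent to `a` that are nonnegative off `q`. -/
lemma exists_reduced (hsymm : ∀ u v, m u v = m v u) (hconn : (assocGraph m).Connected)
    (q : V) (a : V → ℤ) :
    ∃ x, LinEquiv m a x ∧ (∀ v ≠ q, 0 ≤ x v) ∧ NoLegalSetFiring m x (univ.erase q) := by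
  obtain ⟨w, hw⟩ := exists_laplacian_pos hsymm hconn q
  let S : Set (V → ℤ) := {x | LinEquiv m a x ∧ ∀ v ≠ q, 0 ≤ x v}
  have hbdd : ∀ x ∈ S, ∑ v, x v * w v ≤ w q * degDiv a := by
    rintro x ⟨hx, hxq⟩
    rw [hx.degDiv_eq hsymm, degDiv, mul_sum]
    refine sum_le_sum fun v _ => ?_
    rcases eq_or_ne v q with rfl | hv
    · rw [mul_comm]
    · nlinarith [le_of_laplacian_pos hw v, hxq v hv]
  obtain ⟨-, ⟨x, hxS, rfl⟩, hmax⟩ := Int.exists_greatest_of_bdd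
    (P := fun z => ∃ x ∈ S, ∑ v, x v * w v = z)
    ⟨_, by rintro _ ⟨x, hx, rfl⟩; exact hbdd x hx⟩
    (by obtain ⟨x, hx⟩ := exists_linEquiv_nonneg_off hsymm hconn q a; exact ⟨_, x, hx, rfl⟩)
  refine ⟨x, hxS.1, hxS.2, fun B hB hBne => ?_⟩
  by_contra! hlegal
  have hfire : x + tZ m B ∈ S := by
    refine ⟨?_, fun v hv => ?_⟩
    · rw [LinEquiv, ← sub_sub]
      exact sub_mem hxS.1 (AddSubgroup.subset_closure (Set.mem_range_self B))
    · by_cases hvB : v ∈ B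
      · simpa [tZ, hvB] using hlegal v hvB
      · have : (0 : ℤ) ≤ ∑ u ∈ B, (m v u : ℤ) := by positivity
        simp only [Pi.add_apply, tZ, hvB, if_false]
        linarith [hxS.2 v hv]
  have hgain : 0 < ∑ v ∈ B, laplacian m w v :=
    sum_pos (fun v hv => hw v fun hvq => by simpa [hvq] using hB hv) hBne
  have := hmax _ ⟨_, hfire, rfl⟩
  simp only [Pi.add_apply, add_mul, sum_add_distrib, sum_tZ_mul hsymm] at this
  linarith

/-- If `ν - f = laplacian m σ`, then `laplacian m σ ≥ ν + 1` at a vertex minimising `(σ, ρ)`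
lexicographically, so `f` is negative there. -/
lemma not_linEquivEffective_moderator [Nonempty V] (ρ : V → ℤ) :
    ¬ LinEquivEffective m (moderator m ρ) := by
  rintro ⟨f, hf, hν⟩
  obtain ⟨σ, hσ⟩ := linEquiv_iff.1 hν
  obtain ⟨v, -, hv⟩ := univ.exists_min_image (fun v => toLex (σ v, ρ v)) univ_nonempty
  have hlow : ∑ u ∈ univ.filter (fun u => ρ u < ρ v), (m v u : ℤ) ≤ laplacian m σ v := by
    rw [laplacian_apply, sum_filter]
    refine sum_le_sum fun u _ => ?_
    have hvu := Prod.Lex.le_iff.1 (hv u (mem_univ u))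
    simp only [ofLex_toLex] at hvu
    split_ifs with hu
    · have : 1 ≤ σ u - σ v := by rcases hvu with h | ⟨-, h⟩ <;> omega
      exact le_mul_of_one_le_right (by positivity) this
    · have : 0 ≤ σ u - σ v := by rcases hvu with h | ⟨h, -⟩ <;> omega
      positivity
  have hfv := congrFun hσ v
  simp only [Pi.sub_apply, moderator] at hfv
  linarith [hf v]

lemma NoLegalSetFiring.exists_moderator_ge {x : V → ℤ} {A : Finset V}
    (hA : NoLegalSetFiring m x A) :
    ∃ ρ, Function.Injective ρ ∧ ∀ v ∈ A, x v ≤ moderator m ρ v := by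
  obtain ⟨h, hh⟩ := hA.exists_level
  obtain ⟨ρ, hρ, hlt⟩ := exists_injective_lt_of_lt h
  refine ⟨ρ, hρ, fun v hv => ?_⟩
  have hsub : ∑ u ∈ univ.filter (fun u => h u < h v), (m v u : ℤ)
      ≤ ∑ u ∈ univ.filter (fun u => ρ u < ρ v), (m v u : ℤ) :=
    sum_le_sum_of_subset_of_nonneg (monotone_filter_right _ fun u _ => hlt u v)
      fun _ _ _ => by positivity
  have := hh v hv
  simp only [moderator]
  omega

theorem linEquivEffective_or_moderator_sub (hsymm : ∀ u v, m u v = m v u)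
    (hconn : (assocGraph m).Connected) (a : V → ℤ) :
    LinEquivEffective m a ∨
      ∃ ρ, Function.Injective ρ ∧ LinEquivEffective m (moderator m ρ - a) := by
  obtain ⟨q⟩ := hconn.nonempty
  obtain ⟨x, hax, hx, hred⟩ := exists_reduced hsymm hconn q a
  by_cases hxq : 0 ≤ x q
  · refine .inl ⟨x, fun v => ?_, hax⟩
    by_cases hv : v = q
    exacts [hv ▸ hxq, hx v hv]
  · obtain ⟨ρ, hρ, hge⟩ := hred.exists_moderator_ge
    refine .inr ⟨ρ, hρ, moderator m ρ - x, fun v => ?_, ?_⟩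
    · show 0 ≤ moderator m ρ v - x v
      by_cases hv : v = q
      · linarith [neg_one_le_moderator (m := m) ρ v, hv ▸ hxq]
      · linarith [hge v (mem_erase.2 ⟨hv, mem_univ v⟩)]
    · rw [LinEquiv, sub_sub_sub_cancel_left, ← neg_sub]
      exact neg_mem hax

section Rank

variable [Nonempty V]

lemma bddAbove_bnRankSet (hsymm : ∀ u v, m u v = m v u) (d : V → ℤ) :
    BddAbove (bnRankSet m d) := by
  refine ⟨max 0 (degDiv d), ?_⟩
  rintro k (rfl | ⟨hk, hall⟩)
  · exact (neg_one_lt_zero.le).trans (le_max_left _ _)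
  · have := LinEquivEffective.degDiv_nonneg hsymm
      (hall _ (effective_single (Classical.arbitrary V) hk) (degDiv_single _ _))
    rw [degDiv_sub, degDiv_single] at this
    exact le_max_of_le_right (by linarith)

lemma bnRank_mem (hsymm : ∀ u v, m u v = m v u) (d : V → ℤ) : bnRank m d ∈ bnRankSet m d :=
  Int.csSup_mem ⟨-1, .inl rfl⟩ (bddAbove_bnRankSet hsymm d)

lemma neg_one_le_bnRank (hsymm : ∀ u v, m u v = m v u) (d : V → ℤ) : -1 ≤ bnRank m d :=
  le_csSup (bddAbove_bnRankSet hsymm d) (.inl rfl)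

lemma le_bnRank (hsymm : ∀ u v, m u v = m v u) {d : V → ℤ} {k : ℤ} (hk : 0 ≤ k)
    (h : ∀ e, Effective e → degDiv e = k → LinEquivEffective m (d - e)) : k ≤ bnRank m d :=
  le_csSup (bddAbove_bnRankSet hsymm d) (.inr ⟨hk, h⟩)

lemma exists_not_linEquivEffective_sub (hsymm : ∀ u v, m u v = m v u) {d : V → ℤ} {k : ℤ}
    (hk : 0 ≤ k) (hlt : bnRank m d < k) :
    ∃ e, Effective e ∧ degDiv e = k ∧ ¬ LinEquivEffective m (d - e) := by
  by_contra! h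
  exact hlt.not_ge (le_bnRank hsymm hk h)

lemma linEquivEffective_sub_of_degDiv_le_bnRank (hsymm : ∀ u v, m u v = m v u) {d e : V → ℤ}
    (he : Effective e) (hle : degDiv e ≤ bnRank m d) : LinEquivEffective m (d - e) := by
  obtain ⟨v⟩ := ‹Nonempty V›
  rcases bnRank_mem hsymm d with hr | ⟨-, hall⟩
  · linarith [he.degDiv_nonneg]
  · have hc : 0 ≤ bnRank m d - degDiv e := sub_nonneg.2 hle
    have : LinEquivEffective m (d - (e + Pi.single v (bnRank m d - degDiv e))) :=
      hall _ (fun u => add_nonneg (he u) (effective_single v hc u))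
        (by rw [degDiv_add, degDiv_single]; ring)
    convert this.add (effective_single v hc).linEquivEffective using 1
    abel

theorem bnRank_add_le (hsymm : ∀ u v, m u v = m v u) {d d' : V → ℤ} (hd : 0 ≤ bnRank m d)
    (hd' : 0 ≤ bnRank m d') : bnRank m d + bnRank m d' ≤ bnRank m (d + d') := by
  refine le_bnRank hsymm (add_nonneg hd hd') fun e he hdeg => ?_
  obtain ⟨e₁, he₁, he₂, hdeg₁⟩ := exists_effective_sub_effective he hd (by linarith)
  have h₁ := linEquivEffective_sub_of_degDiv_le_bnRank hsymm he₁ hdeg₁.le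
  have h₂ := linEquivEffective_sub_of_degDiv_le_bnRank (d := d') hsymm he₂
    (by rw [degDiv_sub, hdeg, hdeg₁]; linarith)
  convert h₁.add h₂ using 1
  abel

/-- Removing the effective divisor `ν + q` of degree `g` from `K` leaves `ν` of the reversed
orientation minus `q`, which is not equivalent to an effective divisor. -/
theorem bnRank_canonical_le (hsymm : ∀ u v, m u v = m v u) (hloop : ∀ v, m v v = 0)
    (hconn : (assocGraph m).Connected) : bnRank m (canonical m) ≤ genus m - 1 := by
  obtain ⟨q⟩ := ‹Nonempty V›
  obtain ⟨ρ, hρ, hge⟩ := (noLegalSetFiring_zero hsymm hconn q).exists_moderator_ge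
  set E := moderator m ρ + Pi.single q 1
  have hE : Effective E := fun v => by
    by_cases hv : v = q
    · subst hv
      simp only [E, Pi.add_apply, Pi.single_eq_same]
      linarith [neg_one_le_moderator (m := m) ρ v]
    · simpa [E, hv] using hge v (by simp [hv])
  have hdeg : degDiv E = genus m := by
    rw [degDiv_add, degDiv_moderator hsymm hloop hρ, degDiv_single]
    ring
  by_contra! hlt
  have hKE := linEquivEffective_sub_of_degDiv_le_bnRank (d := canonical m) hsymm hE (by omega)
  refine not_linEquivEffective_moderator (m := m) (-ρ) ?_
  rw [← moderator_add_moderator_neg hloop hρ] at hKE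
  convert hKE.add (effective_single q zero_le_one).linEquivEffective using 1
  simp only [E]
  abel

theorem bnRank_sub_bnRank_canonical_sub_le (hsymm : ∀ u v, m u v = m v u)
    (hloop : ∀ v, m v v = 0) (hconn : (assocGraph m).Connected) (d : V → ℤ) :
    bnRank m d - bnRank m (canonical m - d) ≤ degDiv d - genus m + 1 := by
  set s := bnRank m (canonical m - d)
  obtain ⟨e, he, hdege, hne⟩ := exists_not_linEquivEffective_sub hsymm
    (by linarith [neg_one_le_bnRank hsymm (canonical m - d)] : 0 ≤ s + 1) (lt_add_one s)
  obtain ⟨ρ, hρ, f, hf, hνf⟩ := (linEquivEffective_or_moderator_sub hsymm hconn _).resolve_left hne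
  have hdegf : degDiv f = degDiv d + s - genus m + 2 := by
    rw [← hνf.degDiv_eq hsymm, degDiv_sub, degDiv_sub, degDiv_sub,
      degDiv_moderator hsymm hloop hρ, degDiv_canonical hsymm hloop, hdege]
    ring
  by_contra! hlt
  have hdf := linEquivEffective_sub_of_degDiv_le_bnRank hsymm hf (by linarith)
  refine not_linEquivEffective_moderator (m := m) (-ρ)
    ((hdf.add he.linEquivEffective).of_linEquiv ?_)
  rw [LinEquiv, eq_sub_of_add_eq' (moderator_add_moderator_neg hloop hρ)]
  convert neg_mem hνf using 1
  abel

end Rank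

/-- **Clifford inequality for the Baker–Norine rank.** -/
theorem bnRank_clifford {V : Type} [Fintype V] [DecidableEq V]
    (m : V → V → ℕ) (hsymm : ∀ u v, m u v = m v u) (hloop : ∀ v, m v v = 0)
    (hconn : (assocGraph m).Connected)
    (d : V → ℤ) (h0 : 0 ≤ degDiv d) (h1 : degDiv d ≤ 2 * genus m - 2) :
    2 * bnRank m d ≤ degDiv d := by
  have : Nonempty V := hconn.nonempty
  have hRR := bnRank_sub_bnRank_canonical_sub_le hsymm hloop hconn d
  rcases lt_or_ge (bnRank m d) 0 with hr | hr
  · linarith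
  rcases lt_or_ge (bnRank m (canonical m - d)) 0 with hs | hs
  · linarith [neg_one_le_bnRank hsymm (canonical m - d)]
  · have hadd := bnRank_add_le hsymm hr hs
    rw [add_sub_cancel] at hadd
    linarith [bnRank_canonical_le hsymm hloop hconn]
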